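/- arXiv:2004.03050 — 3 statements merged into one kernel-verified Lean document; each statement's English description precedes it below -/
import Mathlib

section
/- Let n ≥ 2, k ≥ 1, and α ≥ 1 be a real number. Let x_1, …, x_n, z_1, …, z_{n−1}, and y_1, …, y_n be subsets of S such that for every i ∈ {1, …, n−1}: (i) α·Δ^k(z_i | x_1 ∪ … ∪ x_i) ≥ Δ(y_i | x_1 ∪ … ∪ x_i) and (ii) Δ(x_{i+1} | x_1 ∪ … ∪ x_i) ≥ Δ^k(z_i | x_1 ∪ … ∪ x_i), and for every i ∈ {1, …, n}: (iii) Δ(x_i | x_1 ∪ … ∪ x_{i−1}) ≥ Δ(y_i | x_1 ∪ … ∪ x_{i−1}). Then f(x_1 ∪ … ∪ x_n) ≥ f(y_1 ∪ … ∪ y_n) / (2 − 1/(∑_{j=0}^{n−1} α^j)). -/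
open Finset

variable {α : Type*}

/-- `f` is monotone on finsets. -/
def IsMonotoneFn (f : Finset α → ℝ) : Prop := ∀ A B : Finset α, A ⊆ B → f A ≤ f B

/-- `f` is submodular. -/
def IsSubmodularFn [DecidableEq α] (f : Finset α → ℝ) : Prop :=
  ∀ A B : Finset α, A ⊆ B → ∀ s ∉ B, f (insert s A) - f A ≥ f (insert s B) - f B

/-- Marginal contribution Δ(A|B) = f(A ∪ B) − f(B). -/
def marg [DecidableEq α] (f : Finset α → ℝ) (A B : Finset α) : ℝ := f (A ∪ B) - f B

/-- Δ^l(A|B): best marginal of a subset of `A` of size at most `l`. -/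
noncomputable def margSup [DecidableEq α] (f : Finset α → ℝ) (l : ℕ) (A B : Finset α) : ℝ :=
  (A.powerset.filter (fun C => C.card ≤ l)).sup' ⟨∅, by simp⟩ (fun C => marg f C B)

/-- Union of the first `i` sets: x_0 ∪ ⋯ ∪ x_{i-1}. -/
def pref [DecidableEq α] (x : ℕ → Finset α) (i : ℕ) : Finset α := (Finset.range i).biUnion x

/-- A nominal greedy profile. -/
def NomGreedy [DecidableEq α] (f : Finset α → ℝ) (Ss : ℕ → Finset α) (k n : ℕ)
    (x : ℕ → Finset α) : Prop :=
  ∀ i < n, x i ⊆ Ss i ∧ (x i).card ≤ k ∧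
    ∀ c : Finset α, c ⊆ Ss i → c.card ≤ k → f (c ∪ pref x i) ≤ f (x i ∪ pref x i)

/-- An augmented greedy profile. -/
def AugGreedy [DecidableEq α] (f : Finset α → ℝ) (Ss : ℕ → Finset α) (k m n : ℕ)
    (x z : ℕ → Finset α) : Prop :=
  ∀ i < n,
    (x i ⊆ Ss i ∪ pref z i ∧ (x i).card ≤ k ∧
      ∀ c : Finset α, c ⊆ Ss i ∪ pref z i → c.card ≤ k →
        f (c ∪ pref x i) ≤ f (x i ∪ pref x i)) ∧
    ∃ zk zr : Finset α,
      z i = zk ∪ zr ∧ zk ⊆ Ss i ∧ zk.card ≤ min k m ∧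
      (∀ w : Finset α, w ⊆ Ss i → w.card ≤ min k m →
        marg f w (pref x (i + 1)) ≤ marg f zk (pref x (i + 1))) ∧
      zr ⊆ Ss i ∧ zr.card ≤ m - k

/-- The optimal value OPT(f, (S_i), k) over feasible profiles with n agents. -/
noncomputable def OPTval [DecidableEq α] [Fintype α] (f : Finset α → ℝ) (Ss : ℕ → Finset α)
    (n k : ℕ) : ℝ :=
  ((Finset.univ : Finset (Fin n → Finset α)).filter
      (fun y => ∀ i : Fin n, y i ⊆ Ss (i : ℕ) ∧ (y i).card ≤ k)).sup'
    ⟨(fun _ => ∅), by simp⟩ (fun y => f (Finset.univ.biUnion (fun i => y i)))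

/-!
The sets `hybridSet x y n m = y m ∪ ⋯ ∪ y (n - 1) ∪ x 0 ∪ ⋯ ∪ x (m - 1)` interpolate between
`pref y n` (at `m = 0`) and `pref x n` (at `m = n`). With `d m` the gain of `x m`, submodularity
and the hypotheses bound the loss of value at step `m` both by `d m` and by `a * d (m + 1)`, so
`f (pref y n) ≤ f (pref x n) + ∑ min (d m) (a * d (m + 1))`. Writing
`r m = d m - min (d m) (a * d (m + 1)) ≥ 0`, we have `d m ≤ r m + a * d (m + 1)`; unrolling gives
`d j ≤ ∑ t, a ^ t * r (j + t)`, hence `f (pref x n) = ∑ d ≤ (∑ j < n, a ^ j) * ∑ r`, and the two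
inequalities combine to the bound.
-/

section SetFunction

variable [DecidableEq α] {f : Finset α → ℝ}

theorem marg_nonneg (hmono : IsMonotoneFn f) (A B : Finset α) : 0 ≤ marg f A B :=
  sub_nonneg.2 (hmono _ _ subset_union_right)

theorem marg_antitone (hmono : IsMonotoneFn f) (hsub : IsSubmodularFn f) (A : Finset α) :
    Antitone (marg f A) := by
  intro B C hBC
  induction A using Finset.induction_on with
  | empty => simp [marg]
  | insert s A _ ih =>
    have hs : f (insert s (A ∪ C)) - f (A ∪ C) ≤ f (insert s (A ∪ B)) - f (A ∪ B) := by
      by_cases hsC : s ∈ A ∪ C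
      · rw [insert_eq_of_mem hsC, sub_self]
        exact sub_nonneg.2 (hmono _ _ (subset_insert _ _))
      · exact hsub _ _ (union_subset_union_right hBC) s hsC
    simp only [marg, insert_union] at ih ⊢
    linarith

@[simp]
theorem pref_zero (x : ℕ → Finset α) : pref x 0 = ∅ := by
  simp [pref]

theorem pref_succ (x : ℕ → Finset α) (i : ℕ) : pref x (i + 1) = x i ∪ pref x i := by
  simp [pref, range_add_one, biUnion_insert]

theorem pref_mono (x : ℕ → Finset α) : Monotone (pref x) :=
  fun _ _ h => biUnion_subset_biUnion_of_subset_left _ (range_subset_range.2 h)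

theorem marg_pref (x : ℕ → Finset α) (i : ℕ) :
    marg f (x i) (pref x i) = f (pref x (i + 1)) - f (pref x i) := by
  rw [marg, pref_succ]

/-- Set to `0` from `n` on, so that the last term `min (d (n - 1)) (a * d n)` of the sums
below vanishes. -/
noncomputable def truncGain (f : Finset α → ℝ) (x : ℕ → Finset α) (n i : ℕ) : ℝ :=
  if i < n then marg f (x i) (pref x i) else 0

theorem sum_truncGain (x : ℕ → Finset α) (n : ℕ) :
    ∑ i ∈ range n, truncGain f x n i = f (pref x n) - f ∅ := by
  rw [← pref_zero x, ← sum_range_sub (fun i => f (pref x i))]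
  refine sum_congr rfl fun i hi => ?_
  rw [truncGain, if_pos (mem_range.1 hi), marg_pref]

def hybridSet (x y : ℕ → Finset α) (n m : ℕ) : Finset α := (Ico m n).biUnion y ∪ pref x m

theorem hybridSet_zero (x y : ℕ → Finset α) (n : ℕ) : hybridSet x y n 0 = pref y n := by
  rw [hybridSet, pref_zero, union_empty, pref, range_eq_Ico]

theorem hybridSet_self (x y : ℕ → Finset α) (n : ℕ) : hybridSet x y n n = pref x n := by
  simp [hybridSet]

theorem f_hybridSet_le_add_marg (hmono : IsMonotoneFn f) (hsub : IsSubmodularFn f)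
    (x y : ℕ → Finset α) {m n : ℕ} (hm : m < n) {B : Finset α} (hB : pref x m ⊆ B) :
    f (hybridSet x y n m) ≤ f ((Ico (m + 1) n).biUnion y ∪ B) + marg f (y m) B := by
  set T := (Ico (m + 1) n).biUnion y
  have hsplit : hybridSet x y n m = y m ∪ (T ∪ pref x m) := by
    rw [hybridSet, ← insert_Ico_add_one_left_eq_Ico hm, biUnion_insert, union_assoc]
  calc f (hybridSet x y n m) ≤ f (y m ∪ (T ∪ B)) :=
        hmono _ _ (hsplit ▸ union_subset_union_right (union_subset_union_right hB))
    _ = f (T ∪ B) + marg f (y m) (T ∪ B) := by rw [marg]; ring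
    _ ≤ f (T ∪ B) + marg f (y m) B :=
        (add_le_add_iff_left _).2 (marg_antitone hmono hsub _ subset_union_right)

theorem f_hybridSet_le_add_min (hmono : IsMonotoneFn f) (hsub : IsSubmodularFn f) {a : ℝ}
    {x y : ℕ → Finset α} {n : ℕ}
    (hy : ∀ i < n, marg f (y i) (pref x i) ≤ marg f (x i) (pref x i))
    (hy' : ∀ i, i + 1 < n →
      marg f (y i) (pref x (i + 1)) ≤ a * marg f (x (i + 1)) (pref x (i + 1)))
    {m : ℕ} (hm : m < n) :
    f (hybridSet x y n m) ≤
      f (hybridSet x y n (m + 1)) + min (truncGain f x n m) (a * truncGain f x n (m + 1)) := by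
  have hgain : truncGain f x n m = marg f (x m) (pref x m) := if_pos hm
  have hcur : f (hybridSet x y n m) ≤
      f ((Ico (m + 1) n).biUnion y ∪ pref x m) + marg f (y m) (pref x m) :=
    f_hybridSet_le_add_marg hmono hsub x y hm (subset_refl _)
  have hy_m := hy m hm
  rcases (show m + 1 ≤ n from hm).lt_or_eq with hm1 | rfl
  · have hnext : f (hybridSet x y n m) ≤
        f (hybridSet x y n (m + 1)) + marg f (y m) (pref x (m + 1)) :=
      f_hybridSet_le_add_marg hmono hsub x y hm (pref_mono x m.le_succ)
    have hpref : f ((Ico (m + 1) n).biUnion y ∪ pref x m) ≤ f (hybridSet x y n (m + 1)) :=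
      hmono _ _ (union_subset_union_right (pref_mono x m.le_succ))
    have hgain' : truncGain f x n (m + 1) = marg f (x (m + 1)) (pref x (m + 1)) := if_pos hm1
    have := hy' m hm1
    rw [hgain, hgain', ← sub_le_iff_le_add']
    exact le_min (by linarith) (by linarith)
  · have hlast : truncGain f x (m + 1) (m + 1) = 0 := if_neg (lt_irrefl _)
    rw [hlast, mul_zero, min_eq_right (hgain ▸ marg_nonneg hmono _ _), add_zero, hybridSet_self]
    rw [Ico_self, biUnion_empty, empty_union] at hcur
    rw [marg_pref] at hy_m
    linarith

theorem f_pref_le_add_sum_min (hmono : IsMonotoneFn f) (hsub : IsSubmodularFn f) {a : ℝ}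
    {x y : ℕ → Finset α} {n : ℕ}
    (hy : ∀ i < n, marg f (y i) (pref x i) ≤ marg f (x i) (pref x i))
    (hy' : ∀ i, i + 1 < n →
      marg f (y i) (pref x (i + 1)) ≤ a * marg f (x (i + 1)) (pref x (i + 1))) :
    f (pref y n) ≤
      f (pref x n) + ∑ m ∈ range n, min (truncGain f x n m) (a * truncGain f x n (m + 1)) := by
  have := sum_le_sum fun m hm =>
    sub_le_iff_le_add'.2 (f_hybridSet_le_add_min hmono hsub hy hy' (mem_range.1 hm))
  rw [sum_range_sub' (fun m => f (hybridSet x y n m)), hybridSet_zero, hybridSet_self] at this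
  linarith

end SetFunction

section GeometricBound

variable {a : ℝ} {d r : ℕ → ℝ} {n : ℕ}

theorem le_sum_geom_of_le_add (ha : 0 ≤ a) (hd : ∀ j < n, d j ≤ r j + a * d (j + 1))
    (hdn : d n = 0) (p j : ℕ) (hjp : j + p = n) : d j ≤ ∑ t ∈ range p, a ^ t * r (j + t) := by
  induction p generalizing j with
  | zero => simp_all
  | succ p ih =>
    calc d j ≤ r j + a * d (j + 1) := hd j (by omega)
      _ ≤ r j + a * ∑ t ∈ range p, a ^ t * r (j + 1 + t) := by
        gcongr; exact ih (j + 1) (by omega)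
      _ = ∑ t ∈ range (p + 1), a ^ t * r (j + t) := by
        rw [sum_range_succ', mul_sum, add_comm]
        simp only [pow_zero, one_mul, add_zero, pow_succ]
        congr 1
        refine sum_congr rfl fun t _ => ?_
        rw [add_right_comm, add_assoc]
        ring

theorem sum_le_geom_mul_sum (ha : 0 ≤ a) (hr : ∀ j, 0 ≤ r j)
    (hd : ∀ j < n, d j ≤ r j + a * d (j + 1)) (hdn : d n = 0) :
    ∑ j ∈ range n, d j ≤ (∑ t ∈ range n, a ^ t) * ∑ j ∈ range n, r j := by
  calc ∑ j ∈ range n, d j ≤ ∑ j ∈ range n, ∑ t ∈ range (n - j), a ^ t * r (j + t) :=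
        sum_le_sum fun j hj => le_sum_geom_of_le_add ha hd hdn _ j (by simp at hj; omega)
    _ = ∑ t ∈ range n, ∑ j ∈ range (n - t), a ^ t * r (j + t) :=
        sum_comm' fun j t => by simp only [mem_range]; omega
    _ = ∑ t ∈ range n, a ^ t * ∑ s ∈ Ico t n, r s := by
        simp only [mul_sum, sum_Ico_eq_sum_range, add_comm]
    _ ≤ ∑ t ∈ range n, a ^ t * ∑ s ∈ range n, r s := by
        gcongr with t
        · exact fun s _ _ => hr s
        · rw [range_eq_Ico]
          exact Ico_subset_Ico_left t.zero_le
    _ = (∑ t ∈ range n, a ^ t) * ∑ j ∈ range n, r j := (sum_mul ..).symm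

theorem sum_le_geom_mul_sum_sub_min (ha : 0 ≤ a) (hdn : d n = 0) :
    ∑ j ∈ range n, d j ≤
      (∑ t ∈ range n, a ^ t) * ∑ j ∈ range n, (d j - min (d j) (a * d (j + 1))) :=
  sum_le_geom_mul_sum ha (fun j => sub_nonneg.2 (min_le_left _ _))
    (fun j _ => by linarith [min_le_right (d j) (a * d (j + 1))]) hdn

end GeometricBound

theorem div_two_sub_inv_le {O P M H : ℝ} (hH : 1 ≤ H) (hO : O ≤ P + M) (hP : P ≤ H * (P - M)) :
    O / (2 - 1 / H) ≤ P := by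
  have hH0 : 0 < H := by linarith
  have hPH : P / H ≤ P - M := by rwa [div_le_iff₀ hH0, mul_comm]
  have hinv : 1 / H ≤ 1 := by rwa [div_le_one hH0]
  rw [div_le_iff₀ (by linarith), mul_sub, mul_one_div]
  linarith

theorem stmt0_general [DecidableEq α] (f : Finset α → ℝ)
    (hnorm : f ∅ = 0) (hmono : IsMonotoneFn f) (hsub : IsSubmodularFn f)
    (n k : ℕ) (a : ℝ) (ha : 1 ≤ a)
    (x z y : ℕ → Finset α)
    (h1 : ∀ i < n - 1, a * margSup f k (z i) (pref x (i + 1)) ≥ marg f (y i) (pref x (i + 1)))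
    (h2 : ∀ i < n - 1, marg f (x (i + 1)) (pref x (i + 1)) ≥ margSup f k (z i) (pref x (i + 1)))
    (h3 : ∀ i < n, marg f (x i) (pref x i) ≥ marg f (y i) (pref x i)) :
    f (pref x n) ≥ f (pref y n) / (2 - 1 / ∑ j ∈ Finset.range n, a ^ j) := by
  rcases Nat.eq_zero_or_pos n with rfl | hn
  · simp [hnorm]
  have ha0 : 0 ≤ a := zero_le_one.trans ha
  have hy' : ∀ i, i + 1 < n →
      marg f (y i) (pref x (i + 1)) ≤ a * marg f (x (i + 1)) (pref x (i + 1)) :=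
    fun i hi => (h1 i (by omega)).trans (mul_le_mul_of_nonneg_left (h2 i (by omega)) ha0)
  have hO := f_pref_le_add_sum_min hmono hsub h3 hy'
  have hP := sum_le_geom_mul_sum_sub_min ha0 (d := truncGain f x n) (if_neg (lt_irrefl n))
  rw [sum_sub_distrib, sum_truncGain, hnorm, sub_zero] at hP
  have hH : 1 ≤ ∑ j ∈ range n, a ^ j :=
    (pow_zero a).symm.le.trans (single_le_sum (fun j _ => pow_nonneg ha0 j) (mem_range.2 hn))
  exact div_two_sub_inv_le hH hO hP

/-- Lemma 1 of the paper (with `y` playing the role of the optimal profile). -/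
theorem stmt0 [DecidableEq α] [Fintype α] (f : Finset α → ℝ)
    (hnorm : f ∅ = 0) (hmono : IsMonotoneFn f) (hsub : IsSubmodularFn f)
    (n k : ℕ) (hn : 2 ≤ n) (hk : 1 ≤ k) (a : ℝ) (ha : 1 ≤ a)
    (x z y : ℕ → Finset α)
    (h1 : ∀ i < n - 1, a * margSup f k (z i) (pref x (i + 1)) ≥ marg f (y i) (pref x (i + 1)))
    (h2 : ∀ i < n - 1, marg f (x (i + 1)) (pref x (i + 1)) ≥ margSup f k (z i) (pref x (i + 1)))
    (h3 : ∀ i < n, marg f (x i) (pref x i) ≥ marg f (y i) (pref x i)) :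
    f (pref x n) ≥ f (pref y n) / (2 - 1 / ∑ j ∈ Finset.range n, a ^ j) :=
  stmt0_general f hnorm hmono hsub n k a ha x z y h1 h2 h3
end

section
/- Let n ≥ 2, k ≥ 1, and α ≥ 1 be a real number. Let x_1, …, x_n, z_1, …, z_{n−1}, and y_1, …, y_n be subsets of S such that for every i ∈ {1, …, n−1}: (i) α·Δ^k(z_i | x_1 ∪ … ∪ x_i) ≥ Δ(y_i | x_1 ∪ … ∪ x_i) and (ii) Δ(x_{i+1} | x_1 ∪ … ∪ x_i) ≥ Δ^k(z_i | x_1 ∪ … ∪ x_i), and for every i ∈ {1, …, n}: (iii) Δ(x_i | x_1 ∪ … ∪ x_{i−1}) ≥ Δ(y_i | x_1 ∪ … ∪ x_{i−1}). Then for any real numbers ε_1, …, ε_{n−1} ∈ [0, 1], setting ε_0 := 0, it holds that f(y_1 ∪ … ∪ y_n) ≤ (1 + α·ε_{n−1})·Δ(x_n | x_1 ∪ … ∪ x_{n−1}) + ∑_{i=1}^{n−1} (2 − ε_i + α·ε_{i−1})·Δ(x_i | x_1 ∪ … ∪ x_{i−1}). -/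
open Finset

variable {α : Type*}

lemma marg_antitone_aux [DecidableEq α] {f : Finset α → ℝ} (hmono : IsMonotoneFn f)
    (hsub : IsSubmodularFn f) (A : Finset α) {B C : Finset α} (hBC : B ⊆ C) :
    f (A ∪ C) - f C ≤ f (A ∪ B) - f B := by
  induction A using Finset.induction with
  | empty => simp
  | @insert s A' hs ih =>
    rw [Finset.insert_union, Finset.insert_union]
    by_cases hsC : s ∈ A' ∪ C
    · rw [Finset.insert_eq_self.mpr hsC]
      have h1 : f (A' ∪ B) ≤ f (insert s (A' ∪ B)) := hmono _ _ (Finset.subset_insert _ _)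
      linarith
    · have := hsub (A' ∪ B) (A' ∪ C) (Finset.union_subset_union_right hBC) s hsC
      linarith

lemma union_marg_le_aux [DecidableEq α] {f : Finset α → ℝ} (hmono : IsMonotoneFn f)
    (hsub : IsSubmodularFn f) (y : ℕ → Finset α) (C : Finset α) (m : ℕ) :
    f (pref y m ∪ C) - f C ≤ ∑ i ∈ Finset.range m, (f (y i ∪ C) - f C) := by
  induction m with
  | zero => simp [pref]
  | succ m ih =>
    rw [Finset.sum_range_succ]
    have hpref : pref y (m + 1) = y m ∪ pref y m := by
      simp [pref, Finset.range_add_one, Finset.biUnion_insert]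
    have h1 := marg_antitone_aux hmono hsub (y m)
      (Finset.subset_union_right : C ⊆ pref y m ∪ C)
    rw [hpref, Finset.union_assoc]
    linarith

lemma f_pref_eq_aux [DecidableEq α] {f : Finset α → ℝ} (hnorm : f ∅ = 0) (x : ℕ → Finset α)
    (m : ℕ) : f (pref x m) = ∑ i ∈ Finset.range m, marg f (x i) (pref x i) := by
  induction m with
  | zero => simp [pref, hnorm]
  | succ m ih =>
    rw [Finset.sum_range_succ, ← ih]
    have hpref : pref x (m + 1) = x m ∪ pref x m := by
      simp [pref, Finset.range_add_one, Finset.biUnion_insert]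
    rw [hpref, marg]; ring

lemma pref_mono_aux [DecidableEq α] (x : ℕ → Finset α) {i j : ℕ} (hij : i ≤ j) :
    pref x i ⊆ pref x j :=
  Finset.biUnion_subset_biUnion_of_subset_left _ (Finset.range_subset_range.mpr hij)

/-- Key intermediate bound in the proof of Lemma 1, for arbitrary weights ε_i ∈ [0,1]. -/
theorem stmt8 [DecidableEq α] [Fintype α] (f : Finset α → ℝ)
    (hnorm : f ∅ = 0) (hmono : IsMonotoneFn f) (hsub : IsSubmodularFn f)
    (n k : ℕ) (hn : 2 ≤ n) (hk : 1 ≤ k) (a : ℝ) (ha : 1 ≤ a)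
    (x z y : ℕ → Finset α)
    (h1 : ∀ i < n - 1, a * margSup f k (z i) (pref x (i + 1)) ≥ marg f (y i) (pref x (i + 1)))
    (h2 : ∀ i < n - 1, marg f (x (i + 1)) (pref x (i + 1)) ≥ margSup f k (z i) (pref x (i + 1)))
    (h3 : ∀ i < n, marg f (x i) (pref x i) ≥ marg f (y i) (pref x i))
    (ε : ℕ → ℝ) (hε0 : ε 0 = 0)
    (hε : ∀ i, 1 ≤ i → i ≤ n - 1 → 0 ≤ ε i ∧ ε i ≤ 1) :
    f (pref y n) ≤ (1 + a * ε (n - 1)) * marg f (x (n - 1)) (pref x (n - 1)) +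
      ∑ j ∈ Finset.range (n - 1), (2 - ε (j + 1) + a * ε j) * marg f (x j) (pref x j) := by
  obtain ⟨N, rfl⟩ : ∃ N, n = N + 1 := ⟨n - 1, by omega⟩
  have hN1 : 1 ≤ N := by omega
  simp only [Nat.add_sub_cancel] at h1 h2 hε ⊢
  set X := pref x N with hX
  have hDdef : ∀ i, marg f (x i) (pref x i) = f (x i ∪ pref x i) - f (pref x i) := fun i => rfl
  -- main chain
  have hchain : f (pref y (N + 1)) ≤ f X + ∑ i ∈ Finset.range (N + 1), (f (y i ∪ X) - f X) := by
    have h0 := union_marg_le_aux hmono hsub y X (N + 1)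
    have hm := hmono _ _ (Finset.subset_union_left : pref y (N + 1) ⊆ pref y (N + 1) ∪ X)
    linarith
  -- bound each term
  have hterm1 : ∀ i ≤ N, f (y i ∪ X) - f X ≤ marg f (x i) (pref x i) := by
    intro i hi
    have hsub1 := marg_antitone_aux hmono hsub (y i) (pref_mono_aux x hi)
    have h3' := h3 i (by omega)
    simp only [marg] at h3' ⊢
    exact le_trans hsub1 (by linarith)
  have hterm2 : ∀ i < N, f (y i ∪ X) - f X ≤ a * marg f (x (i + 1)) (pref x (i + 1)) := by
    intro i hi
    have hsub1 := marg_antitone_aux hmono hsub (y i) (pref_mono_aux x (by omega : i + 1 ≤ N))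
    have hh1 := h1 i hi
    have hh2 := h2 i hi
    have ha0 : (0:ℝ) ≤ a := by linarith
    have hmul := mul_le_mul_of_nonneg_left hh2 ha0
    simp only [marg] at hh1 hmul ⊢
    linarith
  have hmix : ∀ i ∈ Finset.range N, f (y i ∪ X) - f X ≤
      (1 - ε (i + 1)) * marg f (x i) (pref x i) +
        ε (i + 1) * a * marg f (x (i + 1)) (pref x (i + 1)) := by
    intro i hi
    rw [Finset.mem_range] at hi
    obtain ⟨he0, he1⟩ := hε (i + 1) (by omega) (by omega)
    have t1 := hterm1 i (by omega)
    have t2 := hterm2 i hi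
    nlinarith [mul_le_mul_of_nonneg_left t1 (by linarith : (0:ℝ) ≤ 1 - ε (i + 1)),
      mul_le_mul_of_nonneg_left t2 he0]
  -- split off last term and bound the sum
  have hsumsplit : ∑ i ∈ Finset.range (N + 1), (f (y i ∪ X) - f X) ≤
      (∑ i ∈ Finset.range N, ((1 - ε (i + 1)) * marg f (x i) (pref x i) +
        ε (i + 1) * a * marg f (x (i + 1)) (pref x (i + 1)))) + marg f (x N) (pref x N) := by
    rw [Finset.sum_range_succ]
    have hs := Finset.sum_le_sum hmix
    have hl := hterm1 N le_rfl
    linarith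
  have hfX : f X = ∑ i ∈ Finset.range N, marg f (x i) (pref x i) := f_pref_eq_aux hnorm x N
  -- shift identity
  have hshift : ∑ i ∈ Finset.range N, ε (i + 1) * a * marg f (x (i + 1)) (pref x (i + 1)) =
      (∑ j ∈ Finset.range N, a * ε j * marg f (x j) (pref x j)) +
        a * ε N * marg f (x N) (pref x N) := by
    have h1' := Finset.sum_range_succ' (fun i => ε i * a * marg f (x i) (pref x i)) N
    have h2' := Finset.sum_range_succ (fun i => ε i * a * marg f (x i) (pref x i)) N
    have h3' : ∑ j ∈ Finset.range N, a * ε j * marg f (x j) (pref x j) =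
        ∑ j ∈ Finset.range N, ε j * a * marg f (x j) (pref x j) :=
      Finset.sum_congr rfl (fun j _ => by ring)
    simp only [hε0] at h1'
    rw [h3']
    linarith
  have hexpand : ∑ j ∈ Finset.range N, (2 - ε (j + 1) + a * ε j) * marg f (x j) (pref x j) =
      (∑ j ∈ Finset.range N, marg f (x j) (pref x j)) +
        (∑ j ∈ Finset.range N, (1 - ε (j + 1)) * marg f (x j) (pref x j)) +
        ∑ j ∈ Finset.range N, a * ε j * marg f (x j) (pref x j) := by
    rw [← Finset.sum_add_distrib, ← Finset.sum_add_distrib]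
    exact Finset.sum_congr rfl (fun j _ => by ring)
  have hdistrib : ∑ i ∈ Finset.range N, ((1 - ε (i + 1)) * marg f (x i) (pref x i) +
        ε (i + 1) * a * marg f (x (i + 1)) (pref x (i + 1))) =
      (∑ i ∈ Finset.range N, (1 - ε (i + 1)) * marg f (x i) (pref x i)) +
        ∑ i ∈ Finset.range N, ε (i + 1) * a * marg f (x (i + 1)) (pref x (i + 1)) :=
    Finset.sum_add_distrib
  rw [hdistrib, hshift] at hsumsplit
  rw [hexpand]
  have hfin : (1 + a * ε N) * marg f (x N) (pref x N) =
      marg f (x N) (pref x N) + a * ε N * marg f (x N) (pref x N) := by ring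
  linarith
end

section
/- Let S be a finite set, let Q_0 be a d×d real symmetric positive definite matrix, and for each s ∈ S let Q_s be a d×d real symmetric positive semidefinite matrix. Then the function f : 2^S → ℝ defined by f(A) = log det(Q_0 + ∑_{s∈A} Q_s) − log det(Q_0) is normalized (f(∅) = 0), monotone (f(A) ≤ f(B) whenever A ⊆ B ⊆ S), and submodular (f(A ∪ {s}) − f(A) ≥ f(B ∪ {s}) − f(B) for all A ⊆ B ⊆ S and s ∈ S \ B). -/
/-!
Write `R = Bᴴ B`. The matrix determinant lemma gives
`det (N + R) = det N * det (1 + B N⁻¹ Bᴴ)`, so the marginal gain of adding `R` to `N` is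
`log det (1 + B N⁻¹ Bᴴ)`. Since matrix inversion is antitone on positive definite matrices and
`det` is monotone there, this gain decreases as `N` grows in the Loewner order, which is
submodularity; monotonicity is the special case `det N ≤ det (N + R)`.
-/

open Finset
open scoped MatrixOrder

namespace Matrix

theorem PosDef.of_le {n : Type*} {M N : Matrix n n ℝ} (hM : M.PosDef) (hMN : M ≤ N) :
    N.PosDef := by
  simpa using hM.add_posSemidef hMN

variable {n : Type*} [Fintype n] [DecidableEq n]

-- In this shape `M⁻¹ - N⁻¹` is visibly positive semidefinite when `M` is positive definite
-- and `M ≤ N`.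
theorem inv_sub_inv_eq {α : Type*} [CommRing α] {M N : Matrix n n α} (hM : IsUnit M.det)
    (hN : IsUnit N.det) :
    M⁻¹ - N⁻¹ = N⁻¹ * ((N - M) + (N - M) * M⁻¹ * (N - M)) * N⁻¹ := by
  have key : (N - M) + (N - M) * M⁻¹ * (N - M) = N * M⁻¹ * N - N := by
    simp only [sub_mul, mul_sub, Matrix.mul_assoc, nonsing_inv_mul M hM, Matrix.mul_one]
    rw [← Matrix.mul_assoc M, mul_nonsing_inv M hM, Matrix.one_mul]
    abel
  rw [key, mul_sub, sub_mul, Matrix.mul_assoc, Matrix.mul_assoc, mul_nonsing_inv N hN,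
    ← Matrix.mul_assoc, nonsing_inv_mul N hN, Matrix.one_mul, Matrix.mul_one, ← Matrix.mul_assoc,
    nonsing_inv_mul N hN, Matrix.one_mul]

theorem inv_le_inv_of_le {M N : Matrix n n ℝ} (hM : M.PosDef) (hMN : M ≤ N) : N⁻¹ ≤ M⁻¹ := by
  have hP : (N - M).PosSemidef := hMN
  have hN : N.PosDef := hM.of_le hMN
  rw [le_iff, inv_sub_inv_eq hM.det_pos.ne'.isUnit hN.det_pos.ne'.isUnit]
  have hX := hP.add (hM.inv.posSemidef.conjTranspose_mul_mul_same (N - M))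
  rw [hP.1.eq] at hX
  simpa only [hN.inv.1.eq] using hX.conjTranspose_mul_mul_same N⁻¹

theorem one_le_det_one_add {P : Matrix n n ℝ} (hP : P.PosSemidef) : 1 ≤ (1 + P).det := by
  set U := hP.1.eigenvectorUnitary
  have hspec : 1 + P = Unitary.conjStarAlgAut ℝ _ U (diagonal fun i => 1 + hP.1.eigenvalues i) :=
    calc 1 + P = 1 + Unitary.conjStarAlgAut ℝ _ U (diagonal (RCLike.ofReal ∘ hP.1.eigenvalues)) :=
          congrArg _ hP.1.spectral_theorem
      _ = _ := by
        rw [← map_one (Unitary.conjStarAlgAut ℝ _ U), ← map_add, ← diagonal_one, diagonal_add]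
        rfl
  rw [hspec, Unitary.conjStarAlgAut_apply, det_mul_right_comm,
    Unitary.mul_star_self_of_mem U.2, one_mul, det_diagonal]
  exact one_le_prod fun i _ => by linarith [hP.eigenvalues_nonneg i]

theorem det_add_conjTranspose_mul_self {N : Matrix n n ℝ} (hN : N.PosDef) (B : Matrix n n ℝ) :
    (N + Bᴴ * B).det = N.det * (1 + B * N⁻¹ * Bᴴ).det :=
  det_add_mul _ _ hN.det_pos.ne'.isUnit

theorem det_le_det_of_le {M N : Matrix n n ℝ} (hM : M.PosDef) (hMN : M ≤ N) : M.det ≤ N.det := by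
  obtain ⟨B, hB⟩ := CStarAlgebra.nonneg_iff_eq_star_mul_self.mp (sub_nonneg.mpr hMN)
  have hN : N = M + Bᴴ * B := by rw [← star_eq_conjTranspose, ← hB, add_sub_cancel]
  rw [hN, det_add_conjTranspose_mul_self hM]
  exact le_mul_of_one_le_right hM.det_pos.le
    (one_le_det_one_add (hM.inv.posSemidef.mul_mul_conjTranspose_same B))

theorem det_add_mul_det_le {M N R : Matrix n n ℝ} (hM : M.PosDef) (hMN : M ≤ N)
    (hR : R.PosSemidef) : (N + R).det * M.det ≤ (M + R).det * N.det := by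
  have hN : N.PosDef := hM.of_le hMN
  obtain ⟨B, rfl⟩ := CStarAlgebra.nonneg_iff_eq_star_mul_self.mp hR.nonneg
  rw [star_eq_conjTranspose, det_add_conjTranspose_mul_self hN,
    det_add_conjTranspose_mul_self hM]
  have hgain : (1 + B * N⁻¹ * Bᴴ).det ≤ (1 + B * M⁻¹ * Bᴴ).det :=
    det_le_det_of_le (PosDef.one.add_posSemidef (hN.inv.posSemidef.mul_mul_conjTranspose_same B))
      (add_le_add_right (star_right_conjugate_le_conjugate (inv_le_inv_of_le hM hMN) B) 1)
  calc N.det * (1 + B * N⁻¹ * Bᴴ).det * M.det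
      = (1 + B * N⁻¹ * Bᴴ).det * (M.det * N.det) := by ring
    _ ≤ (1 + B * M⁻¹ * Bᴴ).det * (M.det * N.det) :=
        mul_le_mul_of_nonneg_right hgain (mul_pos hM.det_pos hN.det_pos).le
    _ = M.det * (1 + B * M⁻¹ * Bᴴ).det * N.det := by ring

theorem log_det_add_sub_log_det_le {M N R : Matrix n n ℝ} (hM : M.PosDef) (hMN : M ≤ N)
    (hR : R.PosSemidef) :
    Real.log (N + R).det - Real.log N.det ≤ Real.log (M + R).det - Real.log M.det := by
  have hN : N.PosDef := hM.of_le hMN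
  have h := Real.log_le_log (mul_pos (hN.add_posSemidef hR).det_pos hM.det_pos)
    (det_add_mul_det_le hM hMN hR)
  rw [Real.log_mul (hN.add_posSemidef hR).det_pos.ne' hM.det_pos.ne',
    Real.log_mul (hM.add_posSemidef hR).det_pos.ne' hN.det_pos.ne'] at h
  linarith

end Matrix

theorem stmt13_general {α : Type*} [DecidableEq α] (d : ℕ)
    (Q0 : Matrix (Fin d) (Fin d) ℝ) (hQ0 : Q0.PosDef)
    (Q : α → Matrix (Fin d) (Fin d) ℝ) (hQ : ∀ s, (Q s).PosSemidef) :
    let f : Finset α → ℝ := fun A => Real.log (Q0 + ∑ s ∈ A, Q s).det - Real.log Q0.det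
    f ∅ = 0 ∧ (∀ A B : Finset α, A ⊆ B → f A ≤ f B) ∧
      (∀ A B : Finset α, A ⊆ B → ∀ s ∉ B,
        f (insert s A) - f A ≥ f (insert s B) - f B) := by
  intro f
  have hpos (A : Finset α) : (Q0 + ∑ s ∈ A, Q s).PosDef :=
    hQ0.add_posSemidef (Matrix.posSemidef_sum A fun s _ => hQ s)
  have hmono {A B : Finset α} (hAB : A ⊆ B) : Q0 + ∑ s ∈ A, Q s ≤ Q0 + ∑ s ∈ B, Q s :=
    add_le_add_right (sum_le_sum_of_subset_of_nonneg hAB fun s _ _ => (hQ s).nonneg) Q0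
  refine ⟨by simp [f], fun A B hAB => ?_, fun A B hAB s hsB => ?_⟩
  · have := Real.log_le_log (hpos A).det_pos (Matrix.det_le_det_of_le (hpos A) (hmono hAB))
    simp only [f]
    linarith
  · have hsA : s ∉ A := fun h => hsB (hAB h)
    simp only [f]
    rw [sum_insert hsA, sum_insert hsB, add_comm (Q s), add_comm (Q s), ← add_assoc, ← add_assoc]
    linarith [Matrix.log_det_add_sub_log_det_le (hpos A) (hmono hAB) (hQ s)]

/-- The log-det objective from the sensor-fusion example is normalized, monotone and
submodular. -/
theorem stmt13 {α : Type*} [Fintype α] [DecidableEq α] (d : ℕ)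
    (Q0 : Matrix (Fin d) (Fin d) ℝ) (hQ0 : Q0.PosDef)
    (Q : α → Matrix (Fin d) (Fin d) ℝ) (hQ : ∀ s, (Q s).PosSemidef) :
    let f : Finset α → ℝ := fun A => Real.log (Q0 + ∑ s ∈ A, Q s).det - Real.log Q0.det
    f ∅ = 0 ∧ (∀ A B : Finset α, A ⊆ B → f A ≤ f B) ∧
      (∀ A B : Finset α, A ⊆ B → ∀ s ∉ B,
        f (insert s A) - f A ≥ f (insert s B) - f B) :=
  stmt13_general d Q0 hQ0 Q hQ
end
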